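/- Fix an integer m ≥ 1 and let n_z be an odd positive integer. Let j be an integer with m+1 ≤ j ≤ 3m+1 and let t₁ = ((2j − 2m − 1)π − 1)/(2(2m+1)), t₂ = ((2j + 2m + 1)π − 1)/(2(2m+1)) be the corresponding Type I double-point times. Then for every real φ_z: cos(n_z t₁ + φ_z) = cos(n_z t₂ + φ_z) if and only if φ_z ≡ n_z/(2(2m+1)) − j·n_z·π/(2m+1) (mod π), i.e., if and only if φ_z = n_z/(2(2m+1)) − j n_z π/(2m+1) + iπ for some integer i. (In particular, n_z(t₂ − t₁) = n_z π is never an even multiple of π, so equality can only occur through the sum condition n_z(t₁ + t₂) + 2φ_z ∈ 2πℤ.) -/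
import Mathlib


open Real

/-- For the Type I double points of the projection `t ↦ (cos 2t, cos((2m+1)t + 1/2))`,
the height function `z(t) = cos(n_z t + φ_z)` (with `n_z` odd) makes the crossing
singular if and only if `φ_z = n_z/(2(2m+1)) − j n_z π/(2m+1) + iπ` for some
integer `i`. -/
theorem typeI_singular_phases
    (m : ℤ) (hm : 1 ≤ m) (nz : ℕ) (hnz : 0 < nz) (hodd : Odd nz)
    (j : ℤ) (hj1 : m + 1 ≤ j) (hj2 : j ≤ 3 * m + 1)
    (t₁ t₂ : ℝ)
    (ht₁ : t₁ = ((2 * (j : ℝ) - 2 * (m : ℝ) - 1) * π - 1) / (2 * (2 * (m : ℝ) + 1)))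
    (ht₂ : t₂ = ((2 * (j : ℝ) + 2 * (m : ℝ) + 1) * π - 1) / (2 * (2 * (m : ℝ) + 1))) :
    ∀ φz : ℝ,
      Real.cos ((nz : ℝ) * t₁ + φz) = Real.cos ((nz : ℝ) * t₂ + φz) ↔
        ∃ i : ℤ, φz = (nz : ℝ) / (2 * (2 * (m : ℝ) + 1)) -
          (j : ℝ) * (nz : ℝ) * π / (2 * (m : ℝ) + 1) + i * π := by
  intro φz
  have hm' : (1:ℝ) ≤ (m:ℝ) := by exact_mod_cast hm
  have hM : (2 * (m : ℝ) + 1) ≠ 0 := by nlinarith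
  have hdiff : t₂ = t₁ + π := by
    subst ht₁ ht₂; field_simp; ring
  rw [Real.cos_eq_cos_iff]
  constructor
  · rintro ⟨k, hk | hk⟩
    · exfalso
      rw [hdiff] at hk
      have hπ : ((nz:ℝ) - 2*k) * π = 0 := by ring_nf; ring_nf at hk; linarith
      have : (nz:ℝ) = 2*k := by
        have := Real.pi_ne_zero
        rcases mul_eq_zero.mp hπ with h | h
        · linarith
        · exact absurd h this
      have hz : (nz:ℤ) = 2*k := by exact_mod_cast this
      rcases hodd with ⟨r, hr⟩
      omega
    · refine ⟨k, ?_⟩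
      subst ht₁ ht₂
      field_simp at hk ⊢
      nlinarith [hk]
  · rintro ⟨i, hi⟩
    refine ⟨i, Or.inr ?_⟩
    subst hi ht₁ ht₂
    field_simp
    ring
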